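/- arXiv:2208.04606 — 2 statements merged into one kernel-verified Lean document; each statement's English description precedes it below -/
import Mathlib

section
/- Extremum principle for the Caputo derivative: let 0 < α < 1, y ∈ C[0,T] with t^{1-α} y'(t) continuous on [0,T] (in particular y ∈ C¹(0,T]). If y attains its minimum over [0,T] at a point t₀ ∈ (0,T], then the Caputo derivative satisfies d_t^α y(t₀) ≤ 0. -/
/-!
With `g = y - y t₀ ≥ 0`, integrating by parts on `[a, b] ⊂ (0, t₀)` gives
`∫_a^b (t₀ - s)^(-α) y' ≤ (t₀ - b)^(-α) g b`, because the boundary term at `a` and the integral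
of `α (t₀ - s)^(-α-1) g` are nonnegative. Letting `a → 0` bounds `∫_0^b`. Since `y'` is bounded
near `t₀`, `g b = O(t₀ - b)`, so the bound is `O((t₀ - b)^(1-α))`, which tends to `0` as `b → t₀`.
-/

open MeasureTheory Set Filter Topology

theorem continuousOn_of_continuousOn_rpow_mul {f : ℝ → ℝ} {s : Set ℝ} {p : ℝ} (hs : s ⊆ Ioi 0)
    (h : ContinuousOn (fun t => t ^ p * f t) s) : ContinuousOn f s := by
  refine ((continuousOn_id.rpow_const (p := -p) fun t ht => Or.inl (hs ht).ne').mul h).congr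
    fun t ht => ?_
  rw [Pi.mul_apply, id, ← mul_assoc, ← Real.rpow_add (hs ht), neg_add_cancel, Real.rpow_zero,
    one_mul]

theorem integral_sub_rpow_neg_mul_deriv_le {g g' : ℝ → ℝ} {a b c α : ℝ} (hα : 0 ≤ α)
    (hab : a ≤ b) (hbc : b < c) (hg : ∀ x ∈ Icc a b, HasDerivAt g (g' x) x)
    (hg' : IntervalIntegrable g' volume a b) (hg0 : ∀ x ∈ Icc a b, 0 ≤ g x) :
    ∫ s in a..b, (c - s) ^ (-α) * g' s ≤ (c - b) ^ (-α) * g b := by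
  rw [← uIcc_of_le hab] at hg hg0
  have hpos : ∀ x ∈ uIcc a b, 0 < c - x := fun x hx => by
    rw [uIcc_of_le hab] at hx
    linarith [hx.2]
  have hk : ∀ x ∈ uIcc a b, HasDerivAt (fun s => (c - s) ^ (-α)) (α * (c - x) ^ (-α - 1)) x :=
    fun x hx => by
      simpa using ((hasDerivAt_id x).const_sub c).rpow_const (p := -α) (Or.inl (hpos x hx).ne')
  have hk' : IntervalIntegrable (fun x => α * (c - x) ^ (-α - 1)) volume a b :=
    (continuousOn_const.mul ((continuousOn_const.sub continuousOn_id).rpow_const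
      fun x hx => Or.inl (hpos x hx).ne')).intervalIntegrable
  rw [intervalIntegral.integral_mul_deriv_eq_deriv_mul hk hg hk' hg']
  have hboundary : 0 ≤ (c - a) ^ (-α) * g a :=
    mul_nonneg (Real.rpow_nonneg (hpos a left_mem_uIcc).le _) (hg0 a left_mem_uIcc)
  have hremainder : 0 ≤ ∫ x in a..b, α * (c - x) ^ (-α - 1) * g x := by
    refine intervalIntegral.integral_nonneg hab fun x hx => ?_
    rw [← uIcc_of_le hab] at hx
    exact mul_nonneg (mul_nonneg hα (Real.rpow_nonneg (hpos x hx).le _)) (hg0 x hx)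
  linarith

theorem integral_le_of_forall_Ioo_integral_le {f : ℝ → ℝ} {a b C : ℝ} (hab : a < b)
    (hf : IntervalIntegrable f volume a b) (h : ∀ x ∈ Ioo a b, ∫ s in x..b, f s ≤ C) :
    ∫ s in a..b, f s ≤ C := by
  have hcont : ContinuousWithinAt (fun x => ∫ s in x..b, f s) (Ioo a b) a :=
    (intervalIntegral.continuousOn_primitive_interval_left
      ((intervalIntegrable_iff' enorm_ne_top).1 hf) a left_mem_uIcc).mono
      (uIcc_of_le hab.le ▸ Ioo_subset_Icc_self)
  have : (𝓝[Ioo a b] a).NeBot := left_nhdsWithin_Ioo_neBot hab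
  exact le_of_tendsto hcont (eventually_nhdsWithin_of_forall h)

theorem integral_zero_sub_rpow_neg_mul_deriv_le {y : ℝ → ℝ} {b c α : ℝ} (hα : 0 ≤ α)
    (hb : b ∈ Ioo 0 c) (hdiff : ∀ t ∈ Ioc 0 c, DifferentiableAt ℝ y t)
    (hderiv : ContinuousOn (deriv y) (Ioc 0 c)) (hmin : ∀ t ∈ Ioc 0 c, y c ≤ y t)
    (hint : IntervalIntegrable (fun s => (c - s) ^ (-α) * deriv y s) volume 0 c) :
    ∫ s in (0:ℝ)..b, (c - s) ^ (-α) * deriv y s ≤ (c - b) ^ (-α) * (y b - y c) := by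
  refine integral_le_of_forall_Ioo_integral_le hb.1
    (hint.mono_set (uIcc_subset_uIcc_left (mem_uIcc_of_le hb.1.le hb.2.le))) fun a ha => ?_
  have hab : Icc a b ⊆ Ioc 0 c := Icc_subset_Ioc ha.1 hb.2.le
  exact integral_sub_rpow_neg_mul_deriv_le hα ha.2.le hb.2
    (fun x hx => (hdiff x (hab hx)).hasDerivAt.sub_const _)
    ((hderiv.mono ((uIcc_of_le ha.2.le).trans_subset hab)).intervalIntegrable)
    fun x hx => sub_nonneg.2 (hmin x (hab hx))

theorem exists_abs_sub_le_mul_of_continuousOn_deriv {y : ℝ → ℝ} {a b : ℝ}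
    (hd : ∀ x ∈ Icc a b, DifferentiableAt ℝ y x) (hc : ContinuousOn (deriv y) (Icc a b)) :
    ∃ M, ∀ x ∈ Icc a b, |y x - y b| ≤ M * (b - x) := by
  obtain ⟨M, hM⟩ := isCompact_Icc.exists_bound_of_continuousOn hc
  refine ⟨M, fun x hx => ?_⟩
  have := (convex_Icc a b).norm_image_sub_le_of_norm_deriv_le hd hM
    (right_mem_Icc.2 (hx.1.trans hx.2)) hx
  rwa [Real.norm_eq_abs, Real.norm_eq_abs, abs_sub_comm x, abs_of_nonneg (sub_nonneg.2 hx.2)]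
    at this

theorem nonpos_of_eventually_le_mul_rpow_sub {F : ℝ → ℝ} {c M p : ℝ} (hp : 0 < p)
    (hF : ContinuousWithinAt F (Iio c) c) (h : ∀ᶠ b in 𝓝[<] c, F b ≤ M * (c - b) ^ p) :
    F c ≤ 0 := by
  have hbound : Tendsto (fun b => M * (c - b) ^ p) (𝓝[<] c) (𝓝 0) := by
    have : ContinuousAt (fun b => M * (c - b) ^ p) c :=
      continuousAt_const.mul ((continuousAt_const.sub continuousAt_id).rpow_const (Or.inr hp.le))
    simpa [Real.zero_rpow hp.ne'] using this.tendsto.mono_left nhdsWithin_le_nhds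
  exact le_of_tendsto_of_tendsto hF hbound h

theorem caputo_extremum_principle_general (α T t₀ : ℝ) (hα0 : 0 < α) (hα1 : α < 1)
    (y : ℝ → ℝ)
    (hdiff : ∀ t ∈ Set.Ioc (0:ℝ) T, DifferentiableAt ℝ y t)
    (hcont : ContinuousOn (fun t => t ^ (1 - α) * deriv y t) (Set.Icc 0 T))
    (ht₀ : t₀ ∈ Set.Ioc (0:ℝ) T)
    (hmin : ∀ t ∈ Set.Icc (0:ℝ) T, y t₀ ≤ y t) :
    (1 / Real.Gamma (1 - α)) * ∫ s in (0:ℝ)..t₀, (t₀ - s) ^ (-α) * deriv y s ≤ 0 := by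
  obtain ⟨ht₀0, ht₀T⟩ := ht₀
  have hΓ : 0 < Real.Gamma (1 - α) := Real.Gamma_pos_of_pos (sub_pos.2 hα1)
  refine mul_nonpos_of_nonneg_of_nonpos (by positivity) ?_
  by_cases hint : IntervalIntegrable (fun s => (t₀ - s) ^ (-α) * deriv y s) volume 0 t₀
  swap
  · rw [intervalIntegral.integral_undef hint]
  have hIoc : Ioc 0 t₀ ⊆ Ioc 0 T := Ioc_subset_Ioc_right ht₀T
  have hderiv : ContinuousOn (deriv y) (Ioc 0 t₀) := continuousOn_of_continuousOn_rpow_mul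
    (fun _ ht => ht.1) (hcont.mono (hIoc.trans Ioc_subset_Icc_self))
  have hnear : Icc (t₀ / 2) t₀ ⊆ Ioc 0 t₀ := Icc_subset_Ioc (half_pos ht₀0) le_rfl
  obtain ⟨M, hM⟩ := exists_abs_sub_le_mul_of_continuousOn_deriv
    (fun x hx => hdiff x (hIoc (hnear hx))) (hderiv.mono hnear)
  refine nonpos_of_eventually_le_mul_rpow_sub (M := M) (sub_pos.2 hα1)
    (F := fun b => ∫ s in (0:ℝ)..b, (t₀ - s) ^ (-α) * deriv y s) ?_ ?_
  · exact ((intervalIntegral.continuousOn_primitive_interval' hint left_mem_uIcc) t₀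
      right_mem_uIcc).mono_of_mem_nhdsWithin (uIcc_of_le ht₀0.le ▸ Icc_mem_nhdsLT ht₀0)
  filter_upwards [Ioo_mem_nhdsLT (half_lt_self ht₀0)] with b hb
  have hpos : 0 < t₀ - b := sub_pos.2 hb.2
  calc ∫ s in (0:ℝ)..b, (t₀ - s) ^ (-α) * deriv y s
      ≤ (t₀ - b) ^ (-α) * (y b - y t₀) :=
        integral_zero_sub_rpow_neg_mul_deriv_le hα0.le ⟨(half_pos ht₀0).trans hb.1, hb.2⟩
          (fun t ht => hdiff t (hIoc ht)) hderiv
          (fun t ht => hmin t (Ioc_subset_Icc_self (hIoc ht))) hint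
    _ ≤ (t₀ - b) ^ (-α) * (M * (t₀ - b)) :=
      mul_le_mul_of_nonneg_left ((le_abs_self _).trans (hM b ⟨hb.1.le, hb.2.le⟩)) (by positivity)
    _ = M * (t₀ - b) ^ (1 - α) := by
      rw [Real.rpow_sub hpos, Real.rpow_neg hpos.le, Real.rpow_one]; field_simp

/-- Extremum principle for the Caputo fractional derivative: if `y` is continuous on `[0,T]`,
`t^{1-α} y'` extends continuously to `[0,T]`, and `y` attains its minimum over `[0,T]`
at `t₀ ∈ (0,T]`, then `d_t^α y (t₀) ≤ 0`. -/
theorem caputo_extremum_principle (α T t₀ : ℝ) (hα0 : 0 < α) (hα1 : α < 1) (hT : 0 < T)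
    (y : ℝ → ℝ) (hy : ContinuousOn y (Set.Icc 0 T))
    (hdiff : ∀ t ∈ Set.Ioc (0:ℝ) T, DifferentiableAt ℝ y t)
    (hcont : ContinuousOn (fun t => t ^ (1 - α) * deriv y t) (Set.Icc 0 T))
    (ht₀ : t₀ ∈ Set.Ioc (0:ℝ) T)
    (hmin : ∀ t ∈ Set.Icc (0:ℝ) T, y t₀ ≤ y t) :
    (1 / Real.Gamma (1 - α)) * ∫ s in (0:ℝ)..t₀, (t₀ - s) ^ (-α) * deriv y s ≤ 0 :=
  caputo_extremum_principle_general α T t₀ hα0 hα1 y hdiff hcont ht₀ hmin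
end

section
/- Kernel integration identity for the Mittag-Leffler function: for α ∈ (0,1), λ > 0 and 0 ≤ ξ < t, (1/Γ(α)) ∫_ξ^t (t-s)^{α-1} (s-ξ)^{α-1} E_{α,α}(-λ (s-ξ)^α) ds = -(1/λ) (t-ξ)^{α-1} ( E_{α,α}(-λ (t-ξ)^α) - 1/Γ(α) ). -/
/-!
Expanding `E_{α,β}(μ u^α)` as a power series, the kernel integral of each term
`u^{αk+β-1}` is a Beta integral, `B(αk+β, α) (t-ξ)^{αk+α+β-1}`, so termwise
`∫_ξ^t (t-s)^{α-1} (s-ξ)^{β-1} E_{α,β}(μ (s-ξ)^α) ds = Γ(α) (t-ξ)^{α+β-1} E_{α,α+β}(μ (t-ξ)^α)`.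
Sum and integral may be exchanged because the integrals of the absolute values of the terms are
summable: log-convexity of `Γ` gives `Γ(y) (y+α-1)^α ≤ Γ(y+α)`, so the Mittag-Leffler
series converges by the ratio test. The identity is the case `β = α`, `μ = -λ`, combined with
`E_{α,α}(z) = 1/Γ(α) + z E_{α,2α}(z)`.
-/

open MeasureTheory

/-- The Mittag-Leffler function `E_{α,β}(z) = Σ_{k≥0} z^k / Γ(αk+β)`. -/
noncomputable def mittagLeffler (α β z : ℝ) : ℝ :=
  ∑' k : ℕ, z ^ k / Real.Gamma (α * k + β)

open Real Set Filter

namespace Real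

theorem Gamma_mul_rpow_le_Gamma_add {a y : ℝ} (ha0 : 0 < a) (ha1 : a < 1) (hy : 1 < y + a) :
    Gamma y * (y + a - 1) ^ a ≤ Gamma (y + a) := by
  have hs : 0 < y + a - 1 := by linarith
  have hΓ : 0 < Gamma (y + a) := Gamma_pos_of_pos (by linarith)
  have hrec : (y + a - 1) * Gamma (y + a - 1) = Gamma (y + a) := by
    simpa using (Gamma_add_one hs.ne').symm
  have hconv : Gamma y ≤ Gamma (y + a - 1) ^ a * Gamma (y + a) ^ (1 - a) := by
    convert Gamma_mul_add_mul_le_rpow_Gamma_mul_rpow_Gamma (s := y + a - 1) (t := y + a)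
      (b := 1 - a) hs (by linarith) ha0 (by linarith) (by ring) using 2
    ring
  calc Gamma y * (y + a - 1) ^ a
      ≤ Gamma (y + a - 1) ^ a * Gamma (y + a) ^ (1 - a) * (y + a - 1) ^ a := by gcongr
    _ = Gamma (y + a) ^ a * Gamma (y + a) ^ (1 - a) := by
        rw [mul_right_comm, ← mul_rpow (Gamma_pos_of_pos hs).le hs.le, mul_comm _ (y + a - 1), hrec]
    _ = Gamma (y + a) := by rw [← rpow_add hΓ]; simp

theorem summable_pow_div_Gamma_mul_add {a b : ℝ} (ha0 : 0 < a) (ha1 : a < 1) (hb : 0 < b)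
    (x : ℝ) : Summable fun k : ℕ => x ^ k / Gamma (a * k + b) := by
  refine summable_of_ratio_norm_eventually_le (r := 1 / 2) (by norm_num) ?_
  have hlin : Tendsto (fun k : ℕ => a * k + b + a - 1) atTop atTop :=
    (tendsto_atTop_add_const_right _ (b + a - 1)
      (tendsto_natCast_atTop_atTop.const_mul_atTop ha0)).congr fun k => by ring
  filter_upwards [((tendsto_rpow_atTop ha0).comp hlin).eventually_ge_atTop (2 * |x|),
    hlin.eventually_gt_atTop 1] with k hgrowth hk
  have hΓ : 0 < Gamma (a * k + b) := Gamma_pos_of_pos (by positivity)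
  have hpow : 0 < (a * k + b + a - 1) ^ a := rpow_pos_of_pos (by linarith) _
  have hratio : |x| / Gamma (a * k + b + a) ≤ 1 / 2 / Gamma (a * k + b) := by
    rw [div_le_div_iff₀ (by positivity) hΓ]
    calc |x| * Gamma (a * k + b) ≤ (a * k + b + a - 1) ^ a / 2 * Gamma (a * k + b) := by
          gcongr; simp only [Function.comp_apply] at hgrowth; linarith
      _ ≤ 1 / 2 * Gamma (a * k + b + a) := by
          have := Gamma_mul_rpow_le_Gamma_add ha0 ha1 (y := a * k + b) (by linarith)
          linarith
  rw [show a * ((k + 1 : ℕ) : ℝ) + b = a * k + b + a by push_cast; ring]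
  simp only [norm_div, norm_eq_abs, abs_pow, abs_mul, abs_of_pos hΓ,
    abs_of_pos (Gamma_pos_of_pos (by positivity : 0 < a * k + b + a)), pow_succ]
  calc |x| ^ k * |x| / Gamma (a * k + b + a) = |x| ^ k * (|x| / Gamma (a * k + b + a)) := by ring
    _ ≤ |x| ^ k * (1 / 2 / Gamma (a * k + b)) := by gcongr
    _ = 1 / 2 * (|x| ^ k / Gamma (a * k + b)) := by ring

theorem integral_rpow_mul_sub_rpow {a b c : ℝ} (ha : 0 < a) (hb : 0 < b) (hc : 0 < c) :
    ∫ s in 0..c, s ^ (a - 1) * (c - s) ^ (b - 1)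
      = c ^ (a + b - 1) * (Gamma a * Gamma b / Gamma (a + b)) := by
  have hscaled := Complex.betaIntegral_scaled a b hc
  rw [Complex.betaIntegral_eq_Gamma_mul_div _ _ (by simpa) (by simpa)] at hscaled
  apply Complex.ofReal_injective
  rw [← intervalIntegral.integral_ofReal]
  convert hscaled using 1
  · refine intervalIntegral.integral_congr fun s hs => ?_
    rw [uIcc_of_le hc.le] at hs
    push_cast [Complex.ofReal_cpow hs.1, Complex.ofReal_cpow (sub_nonneg.mpr hs.2)]
    rfl
  · push_cast [Complex.ofReal_cpow hc.le, ← Complex.Gamma_ofReal]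
    ring_nf

theorem integral_sub_rpow_mul_sub_rpow {a b ξ t : ℝ} (ha : 0 < a) (hb : 0 < b) (h : ξ < t) :
    ∫ s in ξ..t, (s - ξ) ^ (a - 1) * (t - s) ^ (b - 1)
      = (t - ξ) ^ (a + b - 1) * (Gamma a * Gamma b / Gamma (a + b)) := by
  have hshift := intervalIntegral.integral_comp_sub_right
    (fun u => u ^ (a - 1) * (t - ξ - u) ^ (b - 1)) (a := ξ) (b := t) ξ
  simp only [sub_sub_sub_cancel_right, sub_self] at hshift
  rw [hshift]
  exact integral_rpow_mul_sub_rpow ha hb (sub_pos.mpr h)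

-- A non-integrable function has integral `0`, and this integral is positive.
theorem intervalIntegrable_sub_rpow_mul_sub_rpow {a b ξ t : ℝ} (ha : 0 < a) (hb : 0 < b)
    (h : ξ < t) :
    IntervalIntegrable (fun s => (s - ξ) ^ (a - 1) * (t - s) ^ (b - 1)) volume ξ t := by
  refine intervalIntegral.intervalIntegrable_of_integral_ne_zero ?_
  rw [integral_sub_rpow_mul_sub_rpow ha hb h]
  have := Gamma_pos_of_pos ha
  have := Gamma_pos_of_pos hb
  have := Gamma_pos_of_pos (add_pos ha hb)
  have := rpow_pos_of_pos (sub_pos.mpr h) (a + b - 1)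
  positivity

end Real

theorem integral_norm_const_mul_of_nonneg {X : Type*} [MeasurableSpace X] {μ : Measure X}
    {g : X → ℝ} (hg : 0 ≤ᵐ[μ] g) (c : ℝ) :
    ∫ x, ‖c * g x‖ ∂μ = ‖∫ x, c * g x ∂μ‖ := by
  rw [integral_const_mul, norm_mul, norm_of_nonneg (integral_nonneg_of_ae hg),
    ← integral_const_mul]
  refine integral_congr_ae ?_
  filter_upwards [hg] with x hx
  rw [norm_mul, norm_of_nonneg hx]

theorem mittagLeffler_eq_inv_Gamma_add_mul {α β : ℝ} (hα0 : 0 < α) (hα1 : α < 1) (hβ : 0 < β)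
    (z : ℝ) : mittagLeffler α β z = 1 / Gamma β + z * mittagLeffler α (α + β) z := by
  rw [mittagLeffler, (summable_pow_div_Gamma_mul_add hα0 hα1 hβ z).tsum_eq_zero_add,
    mittagLeffler, ← tsum_mul_left]
  congr 1
  · simp
  · refine tsum_congr fun k => ?_
    rw [pow_succ', Nat.cast_succ, mul_div_assoc]
    ring_nf

theorem integral_sub_rpow_mul_sub_rpow_mul_mittagLeffler {α β μ ξ t : ℝ} (hα0 : 0 < α)
    (hα1 : α < 1) (hβ : 0 < β) (hξt : ξ < t) :
    ∫ s in ξ..t, (t - s) ^ (α - 1) * (s - ξ) ^ (β - 1) * mittagLeffler α β (μ * (s - ξ) ^ α)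
      = Gamma α * (t - ξ) ^ (α + β - 1) * mittagLeffler α (α + β) (μ * (t - ξ) ^ α) := by
  have hc : 0 < t - ξ := sub_pos.mpr hξt
  set F : ℕ → ℝ → ℝ := fun k s =>
    μ ^ k / Gamma (α * k + β) * ((s - ξ) ^ (α * k + β - 1) * (t - s) ^ (α - 1)) with hF
  have hβk (k : ℕ) : 0 < α * k + β := by positivity
  have hF_expand : EqOn
      (fun s => (t - s) ^ (α - 1) * (s - ξ) ^ (β - 1) * mittagLeffler α β (μ * (s - ξ) ^ α))
      (fun s => ∑' k, F k s) (Ioc ξ t) := by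
    intro s hs
    have hs0 : 0 < s - ξ := sub_pos.mpr hs.1
    simp only [mittagLeffler, hF, ← tsum_mul_left]
    refine tsum_congr fun k => ?_
    rw [mul_pow, ← rpow_mul_natCast hs0.le,
      show α * k + β - 1 = α * k + (β - 1) by ring, rpow_add hs0]
    ring
  have hF_int (k : ℕ) : IntegrableOn (F k) (Ioc ξ t) :=
    (intervalIntegrable_iff_integrableOn_Ioc_of_le hξt.le).mp
      ((intervalIntegrable_sub_rpow_mul_sub_rpow (hβk k) hα0 hξt).const_mul _)
  have hF_integral (k : ℕ) : ∫ s in Ioc ξ t, F k s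
      = Gamma α * (t - ξ) ^ (α + β - 1) * ((μ * (t - ξ) ^ α) ^ k / Gamma (α * k + (α + β))) := by
    rw [← intervalIntegral.integral_of_le hξt.le, intervalIntegral.integral_const_mul,
      integral_sub_rpow_mul_sub_rpow (hβk k) hα0 hξt,
      show α * k + β + α - 1 = α * k + (α + β - 1) by ring, rpow_add hc,
      rpow_mul_natCast hc.le, show α * k + β + α = α * k + (α + β) by ring]
    field_simp [(Gamma_pos_of_pos (hβk k)).ne']
    ring
  have hF_norm (k : ℕ) : ∫ s in Ioc ξ t, ‖F k s‖ = ‖∫ s in Ioc ξ t, F k s‖ :=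
    integral_norm_const_mul_of_nonneg (ae_restrict_of_forall_mem measurableSet_Ioc
      fun s hs => mul_nonneg (rpow_nonneg (sub_nonneg.mpr hs.1.le) _)
        (rpow_nonneg (sub_nonneg.mpr hs.2) _)) _
  have hF_summable : Summable fun k => ∫ s in Ioc ξ t, F k s := by
    simpa only [hF_integral] using
      (summable_pow_div_Gamma_mul_add hα0 hα1 (add_pos hα0 hβ) (μ * (t - ξ) ^ α)).mul_left
        (Gamma α * (t - ξ) ^ (α + β - 1))
  rw [intervalIntegral.integral_of_le hξt.le, setIntegral_congr_fun measurableSet_Ioc hF_expand,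
    ← integral_tsum_of_summable_integral_norm hF_int
      (by simpa only [hF_norm] using hF_summable.norm)]
  simp only [hF_integral, tsum_mul_left, mittagLeffler]

theorem mittagLeffler_kernel_identity_general (α lam ξ t : ℝ) (hα0 : 0 < α) (hα1 : α < 1)
    (hlam : 0 < lam) (hξt : ξ < t) :
    (1 / Real.Gamma α) *
        ∫ s in ξ..t, (t - s) ^ (α - 1) * (s - ξ) ^ (α - 1)
          * mittagLeffler α α (-lam * (s - ξ) ^ α)
      = -(1 / lam) * (t - ξ) ^ (α - 1)
          * (mittagLeffler α α (-lam * (t - ξ) ^ α) - 1 / Real.Gamma α) := by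
  rw [integral_sub_rpow_mul_sub_rpow_mul_mittagLeffler hα0 hα1 hα0 hξt,
    mittagLeffler_eq_inv_Gamma_add_mul hα0 hα1 hα0, add_sub_cancel_left,
    show α + α - 1 = α - 1 + α by ring, rpow_add (sub_pos.mpr hξt)]
  field_simp [hlam.ne', (Gamma_pos_of_pos hα0).ne']

/-- Kernel integration identity for the Mittag-Leffler function: for `α ∈ (0,1)`, `λ > 0`,
`0 ≤ ξ < t`:
`(1/Γ(α)) ∫_ξ^t (t-s)^{α-1} (s-ξ)^{α-1} E_{α,α}(-λ(s-ξ)^α) ds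
  = -(1/λ)(t-ξ)^{α-1}(E_{α,α}(-λ(t-ξ)^α) - 1/Γ(α))`. -/
theorem mittagLeffler_kernel_identity (α lam ξ t : ℝ) (hα0 : 0 < α) (hα1 : α < 1)
    (hlam : 0 < lam) (hξ : 0 ≤ ξ) (hξt : ξ < t) :
    (1 / Real.Gamma α) *
        ∫ s in ξ..t, (t - s) ^ (α - 1) * (s - ξ) ^ (α - 1)
          * mittagLeffler α α (-lam * (s - ξ) ^ α)
      = -(1 / lam) * (t - ξ) ^ (α - 1)
          * (mittagLeffler α α (-lam * (t - ξ) ^ α) - 1 / Real.Gamma α) :=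
  mittagLeffler_kernel_identity_general α lam ξ t hα0 hα1 hlam hξt
end
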